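/- Let c_d denote the volume of the unit Euclidean ball in ℝ^d. For every integer n ≥ 2 and every L > 0 with nL < 1/2, the Haar (Lebesgue) measure of the set of (x_1,…,x_n) ∈ Λ^n whose L-proximity graph is connected is at most (c_d (nL)^d)^{n−1}, where the L-proximity graph has vertex set {1,…,n} and an edge between i and j whenever the torus distance satisfies |x_i − x_j| < L. -/

import Mathlib

open MeasureTheory
open scoped BigOperators

noncomputable section

/-- The `d`-dimensional flat torus `ℝ^d/ℤ^d`. -/
abbrev Torus (d : ℕ) : Type := Fin d → AddCircle (1 : ℝ)

/-- The Euclidean quotient distance on the torus. -/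
def tdist {d : ℕ} (x y : Torus d) : ℝ := Real.sqrt (∑ i, dist (x i) (y i) ^ 2)

/-- The volume of the unit Euclidean ball in `ℝ^d`. -/
def ballVol (d : ℕ) : ℝ :=
  (volume (Metric.ball (0 : EuclideanSpace ℝ (Fin d)) 1)).toReal

end

open Set

section aux

variable {d : ℕ}

lemma tdist_nonneg' (x y : Torus d) : 0 ≤ tdist x y := Real.sqrt_nonneg _

lemma tdist_self' (x : Torus d) : tdist x x = 0 := by
  simp [tdist]

lemma tdist_comm' (x y : Torus d) : tdist x y = tdist y x := by
  simp [tdist, dist_comm]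

lemma dist_le_tdist (x y : Torus d) (i : Fin d) : dist (x i) (y i) ≤ tdist x y := by
  rw [tdist, ← Real.sqrt_sq (dist_nonneg (x := x i) (y := y i))]
  exact Real.sqrt_le_sqrt
    (Finset.single_le_sum (f := fun j => dist (x j) (y j) ^ 2)
      (fun j _ => sq_nonneg _) (Finset.mem_univ i))

/-- norm of the vector of coordinate distances in Euclidean space -/
lemma tdist_eq_norm (x y : Torus d) :
    tdist x y = ‖(WithLp.equiv 2 (Fin d → ℝ)).symm (fun i => dist (x i) (y i))‖ := by
  rw [EuclideanSpace.norm_eq, tdist]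
  congr 1
  refine Finset.sum_congr rfl fun i _ => ?_
  rw [WithLp.equiv_symm_apply, PiLp.toLp_apply, Real.norm_eq_abs, sq_abs]

lemma tdist_triangle' (x y z : Torus d) : tdist x z ≤ tdist x y + tdist y z := by
  have h1 : tdist x z ≤
      ‖(WithLp.equiv 2 (Fin d → ℝ)).symm (fun i => dist (x i) (y i)) +
        (WithLp.equiv 2 (Fin d → ℝ)).symm (fun i => dist (y i) (z i))‖ := by
    have hsum : (WithLp.equiv 2 (Fin d → ℝ)).symm (fun i => dist (x i) (y i)) +
        (WithLp.equiv 2 (Fin d → ℝ)).symm (fun i => dist (y i) (z i)) =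
        (WithLp.equiv 2 (Fin d → ℝ)).symm (fun i => dist (x i) (y i) + dist (y i) (z i)) := rfl
    rw [hsum, EuclideanSpace.norm_eq, tdist]
    apply Real.sqrt_le_sqrt
    apply Finset.sum_le_sum
    intro i _
    rw [WithLp.equiv_symm_apply, PiLp.toLp_apply, Real.norm_eq_abs, sq_abs]
    exact pow_le_pow_left₀ dist_nonneg (dist_triangle _ _ _) 2
  calc tdist x z ≤ _ := h1
    _ ≤ _ := norm_add_le _ _
    _ = tdist x y + tdist y z := by rw [tdist_eq_norm, tdist_eq_norm]

lemma continuous_tdist {α : Type*} [TopologicalSpace α] {f g : α → Torus d}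
    (hf : Continuous f) (hg : Continuous g) : Continuous fun a => tdist (f a) (g a) := by
  apply Real.continuous_sqrt.comp
  exact continuous_finset_sum _ fun i _ =>
    (((continuous_apply i).comp hf).dist ((continuous_apply i).comp hg)).pow 2

lemma tdist_sub_zero (z x : Torus d) : tdist z x = tdist (z - x) 0 := by
  unfold tdist
  congr 1
  refine Finset.sum_congr rfl fun i _ => ?_
  have h1 : (z - x) i = z i - x i := rfl
  rw [h1]
  have h0 : ((0 : Torus d) i) = x i - x i := by rw [sub_self]; rfl
  rw [h0, dist_sub_right]

end aux

lemma walk_bound {d n : ℕ} {L : ℝ} (X : Fin n → Torus d) {i j : Fin n}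
    (p : (SimpleGraph.fromRel fun a b => tdist (X a) (X b) < L).Walk i j) :
    tdist (X i) (X j) ≤ p.length * L := by
  induction p with
  | nil => simp [tdist_self']
  | @cons a b c h q ih =>
    have hab : tdist (X a) (X b) < L := by
      rw [SimpleGraph.fromRel_adj] at h
      rcases h.2 with h' | h'
      · exact h'
      · rw [tdist_comm']; exact h'
    calc tdist (X a) (X c) ≤ tdist (X a) (X b) + tdist (X b) (X c) := tdist_triangle' _ _ _
      _ ≤ L + q.length * L := add_le_add hab.le ih
      _ = (q.cons h).length * L := by
          rw [SimpleGraph.Walk.length_cons]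
          push_cast
          ring

lemma conn_bound {d n : ℕ} {L : ℝ} (hL : 0 < L) (hn : 2 ≤ n) (X : Fin n → Torus d)
    (hconn : (SimpleGraph.fromRel fun a b => tdist (X a) (X b) < L).Connected)
    (i : Fin n) : tdist (X i) (X ⟨0, by omega⟩) < n * L := by
  obtain ⟨p⟩ := hconn.preconnected i ⟨0, by omega⟩
  set w := p.toPath.val with hw
  have hlen : w.length < n := by simpa using SimpleGraph.Walk.IsPath.length_lt p.toPath.2
  have h1 : tdist (X i) (X ⟨0, by omega⟩) ≤ w.length * L := walk_bound X w
  exact lt_of_le_of_lt h1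
    (mul_lt_mul_of_pos_right (by exact_mod_cast hlen) hL)

lemma tdist_mk_zero {d : ℕ} (y : Fin d → ℝ) (h : ∀ i, |y i| ≤ 1 / 2) :
    tdist (fun i => (y i : AddCircle (1 : ℝ))) 0 = Real.sqrt (∑ i, (y i) ^ 2) := by
  unfold tdist
  congr 1
  refine Finset.sum_congr rfl fun i _ => ?_
  have h0 : ((0 : Torus d) i) = (0 : AddCircle (1 : ℝ)) := rfl
  rw [h0, dist_zero_right]
  rw [(AddCircle.norm_coe_eq_abs_iff (p := (1:ℝ)) one_ne_zero).mpr (by simpa using h i), sq_abs]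

lemma ball_measurable {d : ℕ} {r : ℝ} : MeasurableSet {z : Torus d | tdist z 0 < r} := by
  have : IsOpen {z : Torus d | tdist z 0 < r} :=
    isOpen_lt (continuous_tdist continuous_id continuous_const) continuous_const
  exact this.measurableSet

lemma torus_ball_volume {d : ℕ} (hd : 1 ≤ d) {r : ℝ} (hr0 : 0 < r) (hr : r < 1 / 2) :
    volume {z : Torus d | tdist z 0 < r} = ENNReal.ofReal (ballVol d * r ^ d) := by
  haveI : Nonempty (Fin d) := Fin.pos_iff_nonempty.mp hd
  set I : Set ℝ := Ioc (-(1/2) : ℝ) (1/2) with hI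
  -- measure preserving quotient map componentwise
  have hmk : MeasurePreserving (fun x : ℝ => (x : AddCircle (1:ℝ)))
      (volume.restrict I) volume := by
    have := AddCircle.measurePreserving_mk (1:ℝ) (-(1/2))
    have he : Ioc (-(1/2) : ℝ) (-(1/2) + 1) = I := by norm_num [hI]
    rwa [he] at this
  have hΦ : MeasurePreserving (fun (y : Fin d → ℝ) (i : Fin d) => ((y i : ℝ) : AddCircle (1:ℝ)))
      (Measure.pi fun _ : Fin d => volume.restrict I) (volume : Measure (Torus d)) :=
    measurePreserving_pi _ _ (fun _ => hmk)
  -- pi of restricted measures is restriction to the box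
  have hbox : (Measure.pi fun _ : Fin d => volume.restrict I) =
      (volume : Measure (Fin d → ℝ)).restrict (univ.pi fun _ => I) := by
    refine Measure.pi_eq fun s hs => ?_
    rw [Measure.restrict_apply (MeasurableSet.univ_pi hs), ← Set.pi_inter_distrib,
      volume_pi_pi]
    exact Finset.prod_congr rfl fun i _ =>
      (Measure.restrict_apply (hs i)).symm
  -- the set in ℝ^d
  set S : Set (Fin d → ℝ) := {y | Real.sqrt (∑ i, (y i) ^ 2) < r} with hS
  have hSbox : ∀ y ∈ S, ∀ i, |y i| < 1 / 2 := by
    intro y hy i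
    have h1 : |y i| ≤ Real.sqrt (∑ j, (y j) ^ 2) := by
      rw [← Real.sqrt_sq_eq_abs]
      exact Real.sqrt_le_sqrt
        (Finset.single_le_sum (f := fun j => (y j) ^ 2) (fun j _ => sq_nonneg _)
          (Finset.mem_univ i))
    calc |y i| ≤ _ := h1
      _ < r := hy
      _ < 1/2 := hr
  have hkey : (fun (y : Fin d → ℝ) (i : Fin d) => ((y i : ℝ) : AddCircle (1:ℝ))) ⁻¹'
      {z : Torus d | tdist z 0 < r} ∩ (univ.pi fun _ => I) = S := by
    ext y
    constructor
    · rintro ⟨hy1, hy2⟩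
      have habs : ∀ i, |y i| ≤ 1 / 2 := by
        intro i
        have := hy2 i (mem_univ i)
        rw [hI] at this
        exact abs_le.mpr ⟨this.1.le, this.2⟩
      have := hy1
      rw [mem_preimage, mem_setOf_eq, tdist_mk_zero y habs] at this
      exact this
    · intro hy
      have habs : ∀ i, |y i| ≤ 1 / 2 := fun i => (hSbox y hy i).le
      refine ⟨?_, ?_⟩
      · rw [mem_preimage, mem_setOf_eq, tdist_mk_zero y habs]
        exact hy
      · intro i _
        have := hSbox y hy i
        rw [hI]
        rw [abs_lt] at this
        exact ⟨this.1, this.2.le⟩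
  -- Euclidean ball volume
  have hSmeas : MeasurableSet S := by
    have : IsOpen S := by
      apply isOpen_lt _ continuous_const
      exact (continuous_finset_sum _ fun i _ => (continuous_apply i).pow 2).sqrt
    exact this.measurableSet
  have hvol : volume {z : Torus d | tdist z 0 < r} = volume S := by
    rw [← hΦ.measure_preimage ball_measurable.nullMeasurableSet, hbox,
      Measure.restrict_apply (hΦ.measurable ball_measurable), hkey]
  have hSe : (MeasurableEquiv.toLp 2 (Fin d → ℝ)).symm ⁻¹' S = Metric.ball 0 r := by
    ext v
    simp only [mem_preimage, MeasurableEquiv.coe_toLp_symm, hS, mem_setOf_eq, Metric.mem_ball, dist_zero_right,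
      EuclideanSpace.norm_eq]
    constructor
    · intro h
      convert h using 2
      refine Finset.sum_congr rfl fun i _ => by rw [Real.norm_eq_abs, sq_abs]
    · intro h
      convert h using 2
      refine Finset.sum_congr rfl fun i _ => by rw [Real.norm_eq_abs, sq_abs]
  have hvol2 : volume S = volume (Metric.ball (0 : EuclideanSpace ℝ (Fin d)) r) := by
    rw [← (EuclideanSpace.volume_preserving_symm_measurableEquiv_toLp (Fin d)).measure_preimage
      hSmeas.nullMeasurableSet, hSe]
  rw [hvol, hvol2, Measure.addHaar_ball _ _ hr0.le, finrank_euclideanSpace_fin]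
  rw [show (volume (Metric.ball (0 : EuclideanSpace ℝ (Fin d)) 1)) =
    ENNReal.ofReal (ballVol d) from (ENNReal.ofReal_toReal measure_ball_lt_top.ne).symm]
  rw [← ENNReal.ofReal_mul (by positivity), mul_comm]

/-- the measure of configurations whose `L`-proximity graph is connected
is at most `(c_d (nL)^d)^{n-1}`. -/
theorem statement11 (d : ℕ) (hd : 1 ≤ d) (n : ℕ) (hn : 2 ≤ n) (L : ℝ) (hL : 0 < L)
    (hnL : (n : ℝ) * L < 1 / 2) :
    MeasureTheory.volume {X : Fin n → Torus d |
        (SimpleGraph.fromRel (fun i j => tdist (X i) (X j) < L)).Connected}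
      ≤ ENNReal.ofReal ((ballVol d * ((n : ℝ) * L) ^ d) ^ (n - 1)) := by
  obtain ⟨m, rfl⟩ : ∃ m, n = m + 1 := ⟨n - 1, by omega⟩
  set r : ℝ := ((m + 1 : ℕ) : ℝ) * L with hr
  have hr0 : 0 < r := by positivity
  have hrhalf : r < 1 / 2 := hnL
  -- the containing set
  have hzero : (⟨0, by omega⟩ : Fin (m + 1)) = 0 := rfl
  have hsub : {X : Fin (m + 1) → Torus d |
      (SimpleGraph.fromRel (fun i j => tdist (X i) (X j) < L)).Connected} ⊆
      {X : Fin (m + 1) → Torus d | ∀ i, tdist (X i) (X 0) < r} := by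
    intro X hX i
    have := conn_bound hL hn X hX i
    rwa [hzero] at this
  refine le_trans (measure_mono hsub) ?_
  -- rewrite via piFinSuccAbove
  set A : Set (Torus d × (Fin m → Torus d)) :=
    {q | ∀ i, tdist (q.2 i) q.1 < r} with hA
  have hAmeas : MeasurableSet A := by
    have : ∀ i : Fin m, IsOpen {q : Torus d × (Fin m → Torus d) | tdist (q.2 i) q.1 < r} := by
      intro i
      exact isOpen_lt (continuous_tdist ((continuous_apply i).comp continuous_snd)
        continuous_fst) continuous_const
    have hAeq : A = ⋂ i, {q : Torus d × (Fin m → Torus d) | tdist (q.2 i) q.1 < r} := by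
      ext q; simp [hA]
    rw [hAeq]
    exact MeasurableSet.iInter fun i => (this i).measurableSet
  have hpre : {X : Fin (m + 1) → Torus d | ∀ i, tdist (X i) (X 0) < r} =
      (MeasurableEquiv.piFinSuccAbove (fun _ : Fin (m + 1) => Torus d) 0) ⁻¹' A := by
    ext X
    simp only [mem_setOf_eq, mem_preimage]
    constructor
    · intro h i
      exact h _
    · intro h i
      induction i using Fin.cases with
      | zero => rw [tdist_self']; exact hr0
      | succ j =>
        have := h j
        have hsucc : (0 : Fin (m+1)).succAbove j = j.succ := by
          simp [Fin.succAbove_zero]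
        simpa [hsucc, Fin.tail] using this
  rw [hpre, (volume_preserving_piFinSuccAbove (fun _ : Fin (m + 1) => Torus d) 0).measure_preimage
    hAmeas.nullMeasurableSet]
  -- Fubini
  rw [Measure.volume_eq_prod, Measure.prod_apply hAmeas]
  have hslice : ∀ x : Torus d, (Prod.mk x ⁻¹' A) =
      univ.pi fun _ : Fin m => {z : Torus d | tdist z x < r} := by
    intro x
    ext Z
    simp [hA, mem_univ_pi]
  have hballx : ∀ x : Torus d,
      volume {z : Torus d | tdist z x < r} = volume {z : Torus d | tdist z 0 < r} := by
    intro x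
    have h1 : {z : Torus d | tdist z x < r} = (· - x) ⁻¹' {z : Torus d | tdist z 0 < r} := by
      ext z
      simp only [mem_setOf_eq, mem_preimage]
      rw [tdist_sub_zero z x]
    rw [h1]
    exact (measurePreserving_sub_right (volume : Measure (Torus d)) x).measure_preimage
      ball_measurable.nullMeasurableSet
  have hval : ∀ x : Torus d, volume (Prod.mk x ⁻¹' A) =
      volume {z : Torus d | tdist z 0 < r} ^ m := by
    intro x
    rw [hslice x, volume_pi_pi, hballx x, Finset.prod_const, Finset.card_univ, Fintype.card_fin]
  calc ∫⁻ x, volume (Prod.mk x ⁻¹' A) ∂volume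
      = ∫⁻ _x : Torus d, volume {z : Torus d | tdist z 0 < r} ^ m ∂volume := by
        exact lintegral_congr fun x => hval x
    _ = volume {z : Torus d | tdist z 0 < r} ^ m * volume (univ : Set (Torus d)) :=
        lintegral_const _
    _ = volume {z : Torus d | tdist z 0 < r} ^ m := by
        have : volume (univ : Set (Torus d)) = 1 := by
          rw [show (volume : Measure (Torus d)) = Measure.pi fun _ => volume from rfl,
            Measure.pi_univ]
          simp [AddCircle.measure_univ]
        rw [this, mul_one]
    _ ≤ ENNReal.ofReal ((ballVol d * r ^ d) ^ (m + 1 - 1)) := by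
        rw [torus_ball_volume hd hr0 hrhalf]
        simp only [Nat.add_sub_cancel]
        exact le_of_eq (ENNReal.ofReal_pow
          (mul_nonneg (show (0:ℝ) ≤ ballVol d from ENNReal.toReal_nonneg) (by positivity)) m).symm
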